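/- Let ℂF : ℂ² → ℂ² be the complexification of Pinchuk's map, let f, h be the Pinchuk polynomials, and define G on {(F̄, H̄) ∈ ℂ² : F̄ ≠ 0} by G(F̄, H̄) = (F̄ + H̄, u(F̄, H̄) − H̄²(F̄ − H̄(H̄ + 1))(F̄ + (6F̄ − H̄)(H̄ + 1)) / F̄²). Then for every (x, y) ∈ ℂ² with f(x, y) ≠ 0 one has ℂF(x, y) = G(f(x, y), h(x, y)); i.e., ℂF restricted to ℂ² \ f⁻¹(0) is the composition G ∘ (f, h). -/

import Mathlib

noncomputable section

/-- The complex Pinchuk auxiliary polynomial `t = xy - 1`. -/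
def cT (x y : ℂ) : ℂ := x * y - 1

/-- The complex Pinchuk auxiliary polynomial `h = t(xt + 1)`. -/
def cH (x y : ℂ) : ℂ := cT x y * (x * cT x y + 1)

/-- The complex Pinchuk auxiliary polynomial `f = (xt+1)^2 (t^2 + y)`. -/
def cF (x y : ℂ) : ℂ := (x * cT x y + 1) ^ 2 * ((cT x y) ^ 2 + y)

/-- The complex Pinchuk polynomial `u(f,h)`. -/
def cU (f h : ℂ) : ℂ :=
  (1/4) * f * (75*f^3 + 300*f^2*h + 450*f*h^2 + 276*f^2 + 828*f*h + 48*h^2 + 364*f + 48*h)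

/-- The complexification `ℂF : ℂ² → ℂ²` of Pinchuk's map, given by the same
    polynomials `p = f + h` and `q = -t² - 6th(h+1) + u(f,h)`. -/
def cPinchuk : ℂ × ℂ → ℂ × ℂ := fun v =>
  (cF v.1 v.2 + cH v.1 v.2,
   -(cT v.1 v.2)^2 - 6 * cT v.1 v.2 * cH v.1 v.2 * (cH v.1 v.2 + 1)
     + cU (cF v.1 v.2) (cH v.1 v.2))

/-- A continuous map `g : X → Y` is *not proper at* `y ∈ Y` if there is no
    neighborhood `U` of `y` such that `g ⁻¹(cl U)` is compact. -/
def NotProperAt {X Y : Type*} [TopologicalSpace X] [TopologicalSpace Y]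
    (g : X → Y) (y : Y) : Prop :=
  ¬ ∃ U ∈ nhds y, IsCompact (g ⁻¹' closure U)

/-- The map `G(F̄, H̄) = (F̄ + H̄, u(F̄, H̄) - H̄²(F̄ - H̄(H̄+1))(F̄ + (6F̄ - H̄)(H̄+1))/F̄²)`,
    defined for `F̄ ≠ 0`. -/
def Gmap (F H : ℂ) : ℂ × ℂ :=
  (F + H, cU F H - H^2 * (F - H * (H + 1)) * (F + (6*F - H) * (H + 1)) / F^2)

/-! With `s = xt + 1` one has `h = ts` and `f - h(h+1) = s(t² + y)`, hence `s(f - h(h+1)) = f`.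
These two relations alone force the correction term of `G` to equal `t² + 6th(h+1)`. -/

theorem mul_cF_sub_cH_mul_cH_add_one (x y : ℂ) :
    (x * cT x y + 1) * (cF x y - cH x y * (cH x y + 1)) = cF x y := by
  simp only [cF, cH, cT]
  ring

theorem sq_mul_sub_mul_add_div_sq {K : Type*} [Field K] {f h s t : K} (hf : f ≠ 0)
    (hh : h = t * s) (hs : s * (f - h * (h + 1)) = f) :
    h ^ 2 * (f - h * (h + 1)) * (f + (6 * f - h) * (h + 1)) / f ^ 2
      = t ^ 2 + 6 * t * h * (h + 1) := by
  rw [div_eq_iff (pow_ne_zero 2 hf)]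
  subst hh
  -- with `D = f - h(h+1)` the left side is `t²(sD)² + 6t²s(h+1)f(sD)`, so substitute `sD = f`
  linear_combination
    (t ^ 2 * (s * (f - t * s * (t * s + 1)) + f) + 6 * t ^ 2 * s * f * (t * s + 1)) * hs

/-- On `ℂ² \ f⁻¹(0)`, the complexified Pinchuk map is the composition `G ∘ (f, h)`. -/
theorem complex_pinchuk_factors_through_G :
    ∀ x y : ℂ, cF x y ≠ 0 → cPinchuk (x, y) = Gmap (cF x y) (cH x y) := by
  intro x y hf
  have correction := sq_mul_sub_mul_add_div_sq (h := cH x y) (t := cT x y) hf rfl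
    (mul_cF_sub_cH_mul_cH_add_one x y)
  refine Prod.ext rfl ?_
  simp only [cPinchuk, Gmap]
  rw [correction]
  ring
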